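/- Let (A,C,ψ) be an entwining structure and define on I^•(A,C,ψ) the codegeneracies (σ_j f)(c ⊗ a₁ ⊗ ... ⊗ a_{n+1}) = f(c ⊗ a₁ ⊗ ... a_j ⊗ 1_A ⊗ a_{j+1} ⊗ ... ⊗ a_{n+1}) and the cyclic operator (τ_n g)(c ⊗ a₁ ⊗ ... ⊗ a_{n+1}) = (-1)^n g(c^ψ ⊗ a₂ ⊗ ... ⊗ a_{n+1} ⊗ a_{1ψ}). Then σ₀ τ_{n+1}² = (-1)^n τ_n σ_n as maps I^{n+1}(A,C,ψ) → I^n(A,C,ψ). -/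

import Mathlib

/-!
Because `ψ (c ⊗ 1) = 1 ⊗ c`, the first application of `τ_{n+1}` to `c ⊗ 1 ⊗ a₁ ⊗ ⋯ ⊗ a_{n+1}`
only moves the `1` to the end; the second one entwines `c` with `a₁` exactly as `τ_n` does.
The signs `(-1)^{n+1}` of the two cyclic operators cancel, and both sides equal `(-1)ⁿ` times
`Σ g(c^ψ ⊗ a₂ ⊗ ⋯ ⊗ a_{n+1} ⊗ 1 ⊗ a_{1ψ})`.
-/

open TensorProduct

/-- An entwining structure `(A, C, ψ)` over a field `k`: a unital `k`-algebra `A`,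
a counital `k`-coalgebra `C` and a `k`-linear map `ψ : C ⊗ A → A ⊗ C` satisfying the
entwining axioms of Brzeziński–Majid. -/
structure Entwining (k A C : Type) [Field k] [Ring A] [Algebra k A]
    [AddCommGroup C] [Module k C] [Coalgebra k C] : Type where
  ψ : C ⊗[k] A →ₗ[k] A ⊗[k] C
  mul_compat : ψ ∘ₗ TensorProduct.map (LinearMap.id : C →ₗ[k] C) (LinearMap.mul' k A) =
    TensorProduct.map (LinearMap.mul' k A) (LinearMap.id : C →ₗ[k] C)
      ∘ₗ (TensorProduct.assoc k A A C).symm.toLinearMap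
      ∘ₗ TensorProduct.map (LinearMap.id : A →ₗ[k] A) ψ
      ∘ₗ (TensorProduct.assoc k A C A).toLinearMap
      ∘ₗ TensorProduct.map ψ (LinearMap.id : A →ₗ[k] A)
      ∘ₗ (TensorProduct.assoc k C A A).symm.toLinearMap
  comul_compat : TensorProduct.map (LinearMap.id : A →ₗ[k] A)
        (CoalgebraStruct.comul (R := k) (A := C)) ∘ₗ ψ =
    (TensorProduct.assoc k A C C).toLinearMap
      ∘ₗ TensorProduct.map ψ (LinearMap.id : C →ₗ[k] C)
      ∘ₗ (TensorProduct.assoc k C A C).symm.toLinearMap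
      ∘ₗ TensorProduct.map (LinearMap.id : C →ₗ[k] C) ψ
      ∘ₗ (TensorProduct.assoc k C C A).toLinearMap
      ∘ₗ TensorProduct.map (CoalgebraStruct.comul (R := k) (A := C)) (LinearMap.id : A →ₗ[k] A)
  counit_compat : (TensorProduct.rid k A).toLinearMap
      ∘ₗ TensorProduct.map (LinearMap.id : A →ₗ[k] A)
        (CoalgebraStruct.counit (R := k) (A := C)) ∘ₗ ψ =
    (TensorProduct.lid k A).toLinearMap
      ∘ₗ TensorProduct.map (CoalgebraStruct.counit (R := k) (A := C)) (LinearMap.id : A →ₗ[k] A)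
  unit_compat : ∀ c : C, ψ (c ⊗ₜ[k] (1 : A)) = (1 : A) ⊗ₜ[k] c

variable {k A C : Type}

/-- `IterRep e m c v ι γ β` says that `Σ_{s : ι} (β s) ⊗ (γ s)` is a representation of
the `m`-fold iterated entwining `c^{ψ^m} ⊗ v_{1ψ} ⊗ ⋯ ⊗ v_{mψ}`, obtained by applying
`ψ` successively: first to `(c, v 0)`, then to the resulting coalgebra elements and
`v 1`, and so on. -/
inductive IterRep [Field k] [Ring A] [Algebra k A] [AddCommGroup C] [Module k C]
    [Coalgebra k C] (e : Entwining k A C) :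
    (m : ℕ) → C → (Fin m → A) → (ι : Type) → (ι → C) → (ι → (Fin m → A)) → Prop
  | zero (c : C) :
      IterRep e 0 c Fin.elim0 PUnit (fun _ => c) (fun _ => Fin.elim0)
  | succ {m : ℕ} (c : C) (v : Fin (m + 1) → A) (ι₀ : Type) [Fintype ι₀]
      (α : ι₀ → A) (γ₀ : ι₀ → C)
      (h : e.ψ (c ⊗ₜ[k] v 0) = ∑ i, α i ⊗ₜ[k] γ₀ i)
      (κ : ι₀ → Type) (γ : (i : ι₀) → κ i → C) (β : (i : ι₀) → κ i → (Fin m → A))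
      (hs : ∀ i : ι₀, IterRep e m (γ₀ i) (fun j => v j.succ) (κ i) (γ i) (β i)) :
      IterRep e (m + 1) c v ((i : ι₀) × κ i) (fun p => γ p.1 p.2)
        (fun p => Fin.cons (α p.1) (β p.1 p.2))

/-- `g ∈ ℐ^{m-1}(A,C,ψ)`: the functional `g : C ⊗ A^{⊗m} → k` is invariant, i.e.
`g(c ⊗ a₁ ⊗ ⋯ ⊗ a_m) = g(c^{ψ^m} ⊗ a_{1ψ} ⊗ ⋯ ⊗ a_{mψ})`, stated via arbitrary
representations of the iterated entwining. -/
def EntwInvariant [Field k] [Ring A] [Algebra k A] [AddCommGroup C] [Module k C]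
    [Coalgebra k C] (e : Entwining k A C) {m : ℕ}
    (g : C →ₗ[k] MultilinearMap k (fun _ : Fin m => A) k) : Prop :=
  ∀ (c : C) (v : Fin m → A) (ι : Type) [Fintype ι] (γ : ι → C) (β : ι → (Fin m → A)),
    IterRep e m c v ι γ β → g c v = ∑ s, g (γ s) (β s)

/-- `TauRel e g tg` says that `tg = τ_m g` is the cyclic operator applied to `g`:
`(τ_m g)(c ⊗ a₁ ⊗ ⋯ ⊗ a_{m+1}) = (-1)^m g(c^ψ ⊗ a₂ ⊗ ⋯ ⊗ a_{m+1} ⊗ a_{1ψ})`, stated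
via arbitrary representations `ψ(c ⊗ a₁) = Σ αᵢ ⊗ γᵢ`. -/
def TauRel [Field k] [Ring A] [Algebra k A] [AddCommGroup C] [Module k C] [Coalgebra k C]
    (e : Entwining k A C) {m : ℕ}
    (g tg : C →ₗ[k] MultilinearMap k (fun _ : Fin (m + 1) => A) k) : Prop :=
  ∀ (c : C) (v : Fin (m + 1) → A) (t : ℕ) (α : Fin t → A) (γ : Fin t → C),
    e.ψ (c ⊗ₜ[k] v 0) = ∑ i, α i ⊗ₜ[k] γ i →
    tg c v = (-1 : k) ^ m *
      ∑ i, g (γ i) (Function.update (fun j : Fin (m + 1) => v (j + 1)) (Fin.last m) (α i))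

theorem TensorProduct.exists_fin_sum_tmul {R M N : Type} [CommRing R] [AddCommGroup M]
    [Module R M] [AddCommGroup N] [Module R N] (x : M ⊗[R] N) :
    ∃ (t : ℕ) (α : Fin t → M) (γ : Fin t → N), x = ∑ i, α i ⊗ₜ[R] γ i := by
  obtain ⟨S, rfl⟩ := TensorProduct.exists_finset x
  refine ⟨S.card, fun i => (S.equivFin.symm i).1.1, fun i => (S.equivFin.symm i).1.2, ?_⟩
  rw [← Finset.sum_coe_sort]
  exact (Fintype.sum_equiv S.equivFin.symm _ _ fun _ => rfl).symm

namespace Fin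

variable {β : Type*} {n : ℕ}

theorem update_add_one_last_eq_snoc_tail (w : Fin (n + 1) → β) (a : β) :
    Function.update (fun j : Fin (n + 1) => w (j + 1)) (last n) a = snoc (tail w) a := by
  ext j
  induction j using lastCases with
  | last => simp
  | cast i => simp [coeSucc_eq_succ, tail, (castSucc_lt_last i).ne]

theorem tail_snoc (p : Fin (n + 1) → β) (x : β) :
    tail (α := fun _ => β) (snoc (α := fun _ => β) p x) = snoc (tail p) x := by
  ext j
  induction j using lastCases with
  | last => simp [tail]
  | cast j =>
    simp only [tail, snoc_castSucc]
    rw [succ_castSucc, snoc_castSucc]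

theorem insertNth_castSucc_snoc (i : Fin (n + 1)) (x a : β) (p : Fin n → β) :
    insertNth (α := fun _ => β) i.castSucc x (snoc (α := fun _ => β) p a) =
      snoc (α := fun _ => β) (insertNth (α := fun _ => β) i x p) a := by
  refine insertNth_eq_iff.2 ⟨by simp, funext fun j => ?_⟩
  induction j using lastCases with
  | last => simp [removeNth, succAbove_ne_last_last (castSucc_lt_last i).ne]
  | cast j =>
    simp only [removeNth, castSucc_succAbove_castSucc, snoc_castSucc, insertNth_apply_succAbove]

end Fin

theorem neg_one_pow_mul_neg_one_pow_mul {R : Type*} [Ring R] (n : ℕ) (x : R) :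
    (-1 : R) ^ n * ((-1) ^ n * x) = x := by
  rw [← mul_assoc, ← pow_add, ← two_mul, pow_mul, neg_one_sq, one_pow, one_mul]

namespace TauRel

variable [Field k] [Ring A] [Algebra k A] [AddCommGroup C] [Module k C] [Coalgebra k C]
  {e : Entwining k A C} {m : ℕ} {g tg : C →ₗ[k] MultilinearMap k (fun _ : Fin (m + 1) => A) k}

theorem apply_eq_sum_snoc_tail (h : TauRel e g tg) (c : C) (v : Fin (m + 1) → A) {t : ℕ}
    (α : Fin t → A) (γ : Fin t → C) (hψ : e.ψ (c ⊗ₜ[k] v 0) = ∑ i, α i ⊗ₜ[k] γ i) :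
    tg c v = (-1 : k) ^ m * ∑ i, g (γ i) (Fin.snoc (Fin.tail v) (α i)) := by
  simp only [h c v t α γ hψ, Fin.update_add_one_last_eq_snoc_tail]

theorem apply_of_head_eq_one (h : TauRel e g tg) (c : C) {v : Fin (m + 1) → A}
    (hv : v 0 = 1) : tg c v = (-1 : k) ^ m * g c (Fin.snoc (Fin.tail v) 1) := by
  have hψ : e.ψ (c ⊗ₜ[k] v 0) = ∑ _ : Fin 1, (1 : A) ⊗ₜ[k] c := by
    rw [hv, e.unit_compat, Fin.sum_univ_one]
  rw [h.apply_eq_sum_snoc_tail c v _ _ hψ, Fin.sum_univ_one]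

end TauRel

/-- On the cocyclic module `ℐ^•(A,C,ψ)`, with codegeneracies
`(σ_j f)(c ⊗ a₁ ⊗ ⋯ ⊗ a_{n+1}) = f(c ⊗ a₁ ⊗ ⋯ ⊗ a_j ⊗ 1 ⊗ a_{j+1} ⊗ ⋯ ⊗ a_{n+1})`
and the cyclic operator `τ`, the identity `σ₀ ∘ τ_{n+1}² = (-1)ⁿ τ_n ∘ σ_n` holds as
maps `ℐ^{n+1}(A,C,ψ) → ℐⁿ(A,C,ψ)`. -/
theorem codegeneracy_cyclic_compat
    [Field k] [Ring A] [Algebra k A] [AddCommGroup C] [Module k C] [Coalgebra k C]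
    (e : Entwining k A C) (n : ℕ)
    (g' : C →ₗ[k] MultilinearMap k (fun _ : Fin (n + 2) => A) k)
    (t1 t2 : C →ₗ[k] MultilinearMap k (fun _ : Fin (n + 2) => A) k)
    (ht1 : TauRel e g' t1)   -- t1 = τ_{n+1} g'
    (ht2 : TauRel e t1 t2)   -- t2 = τ_{n+1}² g'
    (s0 : C →ₗ[k] MultilinearMap k (fun _ : Fin (n + 1) => A) k)
    (hs0 : ∀ (c : C) (v : Fin (n + 1) → A),   -- s0 = σ₀ (τ_{n+1}² g')
      s0 c v = t2 c (Fin.insertNth (0 : Fin (n + 2)) (1 : A) v))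
    (sn : C →ₗ[k] MultilinearMap k (fun _ : Fin (n + 1) => A) k)
    (hsn : ∀ (c : C) (v : Fin (n + 1) → A),   -- sn = σ_n g'
      sn c v = g' c (Fin.insertNth (⟨n, by omega⟩ : Fin (n + 2)) (1 : A) v))
    (tsn : C →ₗ[k] MultilinearMap k (fun _ : Fin (n + 1) => A) k)
    (htsn : TauRel e sn tsn) :   -- tsn = τ_n (σ_n g')
    ∀ (c : C) (v : Fin (n + 1) → A), s0 c v = (-1 : k) ^ n * tsn c v := by
  intro c v
  obtain ⟨t, α, γ, hψ⟩ := TensorProduct.exists_fin_sum_tmul (e.ψ (c ⊗ₜ[k] v 0))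
  have hσ : ∀ (c' : C) (a : A),
      sn c' (Fin.snoc (Fin.tail v) a) = g' c' (Fin.snoc (Fin.snoc (Fin.tail v) 1) a) := by
    intro c' a
    rw [hsn, ← Fin.insertNth_last' (1 : A), ← Fin.insertNth_castSucc_snoc]
    rfl
  calc s0 c v = (-1 : k) ^ (n + 1) * t1 c (Fin.snoc (α := fun _ => A) v 1) := by
        rw [hs0, ht2.apply_of_head_eq_one c (Fin.insertNth_apply_same _ _ _),
          Fin.insertNth_zero', Fin.tail_cons]
    _ = ∑ i, g' (γ i) (Fin.snoc (Fin.snoc (Fin.tail v) 1) (α i)) := by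
        rw [ht1.apply_eq_sum_snoc_tail _ _ α γ (by simpa using hψ), Fin.tail_snoc,
          neg_one_pow_mul_neg_one_pow_mul]
    _ = ∑ i, sn (γ i) (Fin.snoc (Fin.tail v) (α i)) := by simp only [hσ]
    _ = (-1 : k) ^ n * tsn c v := by
        rw [htsn.apply_eq_sum_snoc_tail c v α γ hψ, neg_one_pow_mul_neg_one_pow_mul]
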